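/- In any point-symmetric state space S (there exists s_0 with 2s_0 − s ∈ S for all s ∈ S), every non-trivial extreme effect e satisfies e(s_0) = 1/2, and every non-trivial extreme effect is indecomposable. -/

import Mathlib

/-- An effect on a state space `S`. -/
def IsEffect {V : Type*} [AddCommGroup V] [Module ℝ V]
    (S : Set V) (e : V →ₗ[ℝ] ℝ) : Prop :=
  ∀ s ∈ S, 0 ≤ e s ∧ e s ≤ 1

/-- The effect space of `S`. -/
def EffectSet {V : Type*} [AddCommGroup V] [Module ℝ V] (S : Set V) :
    Set (V →ₗ[ℝ] ℝ) :=
  {e | IsEffect S e}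

/-- A non-zero effect `e` is indecomposable if in any decomposition `e = e₁ + e₂`
into effects, both `e₁` and `e₂` are scalar multiples of `e`. -/
def Indecomposable {V : Type*} [AddCommGroup V] [Module ℝ V]
    (S : Set V) (e : V →ₗ[ℝ] ℝ) : Prop :=
  e ≠ 0 ∧ ∀ e₁ e₂ : V →ₗ[ℝ] ℝ, IsEffect S e₁ → IsEffect S e₂ → e = e₁ + e₂ →
    (∃ c : ℝ, e₁ = c • e) ∧ (∃ c : ℝ, e₂ = c • e)

/-!
Reflection in `s₀` turns every effect `f` into the effect `s ↦ 2 f(s₀) - f(s)`, so `f` takes its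
values in `[2 f(s₀) - 1, 2 f(s₀)]` on `S`. An extreme effect that stays below some `c < 1`, or
above some `c > 0`, can be perturbed within the effect space, hence is `0` or `u`; so a
non-trivial extreme effect has `2 e(s₀) = 1`. If `e = e₁ + e₂`, then `e₁ + 2 e₂(s₀) e` and
`e₂ + 2 e₁(s₀) e` are effects with midpoint `e`, and extremality forces `e₁ = 2 e₁(s₀) e`.
-/

open Set

lemma eq_zero_of_add_mem_of_sub_mem_of_mem_extremePoints {E : Type*} [AddCommGroup E]
    [Module ℝ E] {A : Set E} {x d : E} (hx : x ∈ A.extremePoints ℝ) (hadd : x + d ∈ A)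
    (hsub : x - d ∈ A) : d = 0 := by
  have hmid : x ∈ openSegment ℝ (x + d) (x - d) :=
    ⟨1 / 2, 1 / 2, by norm_num, by norm_num, by norm_num, by module⟩
  simpa using hx.2 hadd hsub hmid

section

variable {V : Type*} [AddCommGroup V] [Module ℝ V] {S : Set V}

def IsSymmetricAbout (S : Set V) (s₀ : V) : Prop :=
  ∀ s ∈ S, (2 : ℝ) • s₀ - s ∈ S

namespace IsEffect

variable {f : V →ₗ[ℝ] ℝ}

lemma apply_mem_Icc_of_isSymmetricAbout {s₀ s : V} (hf : IsEffect S f)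
    (hS : IsSymmetricAbout S s₀) (hs : s ∈ S) : f s ∈ Icc (2 * f s₀ - 1) (2 * f s₀) := by
  have hrefl : f ((2 : ℝ) • s₀ - s) = 2 * f s₀ - f s := by
    rw [map_sub, map_smul, smul_eq_mul]
  obtain ⟨h0, h1⟩ := hf _ (hS s hs)
  constructor <;> linarith

lemma add_smul_of_le {g : V →ₗ[ℝ] ℝ} (hf : IsEffect S f) (hg : IsEffect S g) {t : ℝ} (ht : 0 ≤ t)
    (hle : ∀ s ∈ S, f s ≤ 1 - t) : IsEffect S (f + t • g) := by
  intro s hs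
  obtain ⟨hf0, -⟩ := hf s hs
  obtain ⟨hg0, hg1⟩ := hg s hs
  have := hle s hs
  simp only [LinearMap.add_apply, LinearMap.smul_apply, smul_eq_mul]
  constructor <;> nlinarith

end IsEffect

variable {e : V →ₗ[ℝ] ℝ}

lemma eq_zero_of_mem_extremePoints_of_le (he : e ∈ (EffectSet S).extremePoints ℝ) {c : ℝ}
    (hc : c < 1) (hle : ∀ s ∈ S, e s ≤ c) : e = 0 := by
  suffices (1 - c) • e = 0 by simpa [sub_eq_zero, hc.ne'] using this
  refine eq_zero_of_add_mem_of_sub_mem_of_mem_extremePoints he (fun s hs => ?_)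
    (fun s hs => ?_) <;>
  · obtain ⟨he0, -⟩ := he.1 s hs
    have := hle s hs
    simp only [LinearMap.add_apply, LinearMap.sub_apply, LinearMap.smul_apply, smul_eq_mul]
    constructor <;> nlinarith

lemma eq_of_mem_extremePoints_of_le {u : V →ₗ[ℝ] ℝ} (hu : ∀ s ∈ S, u s = 1)
    (he : e ∈ (EffectSet S).extremePoints ℝ) {c : ℝ} (hc : 0 < c)
    (hle : ∀ s ∈ S, c ≤ e s) : e = u := by
  suffices c • (u - e) = 0 by simpa [sub_eq_zero, hc.ne', eq_comm] using this
  refine eq_zero_of_add_mem_of_sub_mem_of_mem_extremePoints he (fun s hs => ?_)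
    (fun s hs => ?_) <;>
  · obtain ⟨-, he1⟩ := he.1 s hs
    have := hle s hs
    simp only [LinearMap.add_apply, LinearMap.sub_apply, LinearMap.smul_apply, smul_eq_mul,
      hu s hs]
    constructor <;> nlinarith

variable {u : V →ₗ[ℝ] ℝ} {s₀ : V}

lemma apply_eq_half_of_mem_extremePoints (hu : ∀ s ∈ S, u s = 1) (hS : IsSymmetricAbout S s₀)
    (he : e ∈ (EffectSet S).extremePoints ℝ) (he0 : e ≠ 0) (heu : e ≠ u) : e s₀ = 1 / 2 := by
  have hIcc := fun s (hs : s ∈ S) => IsEffect.apply_mem_Icc_of_isSymmetricAbout he.1 hS hs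
  have hupper : 1 ≤ 2 * e s₀ := by
    by_contra! h
    exact he0 (eq_zero_of_mem_extremePoints_of_le he h fun s hs => (hIcc s hs).2)
  have hlower : 2 * e s₀ - 1 ≤ 0 := by
    by_contra! h
    exact heu (eq_of_mem_extremePoints_of_le hu he h fun s hs => (hIcc s hs).1)
  linarith

lemma eq_smul_of_mem_extremePoints_of_eq_add (hs₀ : s₀ ∈ S) (hS : IsSymmetricAbout S s₀)
    (he : e ∈ (EffectSet S).extremePoints ℝ) (hhalf : e s₀ = 1 / 2) {e₁ e₂ : V →ₗ[ℝ] ℝ}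
    (h₁ : IsEffect S e₁) (h₂ : IsEffect S e₂) (hsum : e = e₁ + e₂) :
    e₁ = (2 * e₁ s₀) • e := by
  have hsum₀ : e₁ s₀ + e₂ s₀ = 1 / 2 := by rw [← hhalf, hsum, LinearMap.add_apply]
  have hf : IsEffect S (e₁ + (2 * e₂ s₀) • e) :=
    h₁.add_smul_of_le he.1 (by linarith [(h₂ s₀ hs₀).1]) fun s hs => by
      linarith [(h₁.apply_mem_Icc_of_isSymmetricAbout hS hs).2]
  have hg : IsEffect S (e₂ + (2 * e₁ s₀) • e) :=
    h₂.add_smul_of_le he.1 (by linarith [(h₁ s₀ hs₀).1]) fun s hs => by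
      linarith [(h₂.apply_mem_Icc_of_isSymmetricAbout hS hs).2]
  have ht : 2 * e₁ s₀ = 1 - 2 * e₂ s₀ := by linarith
  rw [ht] at hg ⊢
  have hsub : e - (e₁ + (2 * e₂ s₀) • e - e) = e₂ + (1 - 2 * e₂ s₀) • e := by
    rw [hsum]; module
  have hd := eq_zero_of_add_mem_of_sub_mem_of_mem_extremePoints he
    (by rw [add_sub_cancel]; exact hf) (by rw [hsub]; exact hg)
  linear_combination (norm := module) hd

lemma indecomposable_of_mem_extremePoints (hs₀ : s₀ ∈ S) (hS : IsSymmetricAbout S s₀)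
    (he : e ∈ (EffectSet S).extremePoints ℝ) (he0 : e ≠ 0) (hhalf : e s₀ = 1 / 2) :
    Indecomposable S e :=
  ⟨he0, fun _ _ h₁ h₂ hsum =>
    ⟨⟨_, eq_smul_of_mem_extremePoints_of_eq_add hs₀ hS he hhalf h₁ h₂ hsum⟩,
      ⟨_, eq_smul_of_mem_extremePoints_of_eq_add hs₀ hS he hhalf h₂ h₁
        (hsum.trans (add_comm _ _))⟩⟩⟩

end

theorem pointSymmetric_extreme_effects_general
    {V : Type*} [NormedAddCommGroup V] [NormedSpace ℝ V]
    (S : Set V)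
    (u : V →ₗ[ℝ] ℝ) (hu : ∀ s ∈ S, u s = 1)
    (s₀ : V) (hs₀ : s₀ ∈ S) (hsym : ∀ s ∈ S, (2 : ℝ) • s₀ - s ∈ S) :
    ∀ e ∈ Set.extremePoints ℝ (EffectSet S), e ≠ 0 → e ≠ u →
      e s₀ = 1 / 2 ∧ Indecomposable S e := by
  intro e he he0 heu
  have hhalf := apply_eq_half_of_mem_extremePoints hu hsym he he0 heu
  exact ⟨hhalf, indecomposable_of_mem_extremePoints hs₀ hsym he he0 hhalf⟩

/-- in a point-symmetric state space `S` (with symmetry point `s₀`),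
every non-trivial extreme effect `e` satisfies `e s₀ = 1/2` and is indecomposable. -/
theorem pointSymmetric_extreme_effects
    {V : Type*} [NormedAddCommGroup V] [NormedSpace ℝ V] [FiniteDimensional ℝ V]
    (S : Set V) (hSne : S.Nonempty) (hScvx : Convex ℝ S) (hScpt : IsCompact S)
    (u : V →ₗ[ℝ] ℝ) (hu : ∀ s ∈ S, u s = 1)
    (s₀ : V) (hs₀ : s₀ ∈ S) (hsym : ∀ s ∈ S, (2 : ℝ) • s₀ - s ∈ S) :
    ∀ e ∈ Set.extremePoints ℝ (EffectSet S), e ≠ 0 → e ≠ u →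
      e s₀ = 1 / 2 ∧ Indecomposable S e :=
  pointSymmetric_extreme_effects_general S u hu s₀ hs₀ hsym
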